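/- Let ν ∈ [−1, 1] and let t be a complex number with |t| < 1. Then 1 − 2νt + t² is not a nonpositive real number, and the principal square root satisfies 1/√(1 − 2νt + t²) = Σ_{n=0}^∞ 𝒫_n(ν) tⁿ, where 𝒫_n is the n-th Legendre polynomial; in particular the series on the right converges. -/

import Mathlib

open scoped NNReal ENNReal

/-- The `n`-th Legendre polynomial via the Rodrigues formula. -/
noncomputable def legendreP (n : ℕ) (x : ℝ) : ℝ :=
  (1 / (2 ^ n * n.factorial)) * iteratedDeriv n (fun y : ℝ => (y ^ 2 - 1) ^ n) x

namespace Stmt10Aux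

open Complex Finset Polynomial
open scoped NNReal ENNReal



noncomputable def cb (n : ℕ) : ℂ := (n.centralBinom : ℂ) / 4 ^ n

lemma centralBinom_le_four_pow (n : ℕ) : n.centralBinom ≤ 4 ^ n := by
  have h := Finset.single_le_sum (f := fun i => (2 * n).choose i)
    (fun i _ => Nat.zero_le _) (Finset.self_mem_range_succ n)
  calc n.centralBinom = (2 * n).choose n := rfl
    _ ≤ ∑ m ∈ Finset.range (2 * n + 1), (2 * n).choose m := by
        refine Finset.single_le_sum (fun i _ => Nat.zero_le _) ?_
        simp [Nat.lt_succ_iff]; omega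
    _ = 2 ^ (2 * n) := Nat.sum_range_choose (2 * n)
    _ = 4 ^ n := by rw [pow_mul]; norm_num

lemma norm_cb_le_one (n : ℕ) : ‖cb n‖ ≤ 1 := by
  rw [cb]
  rw [norm_div]
  have h4 : ‖(4 : ℂ) ^ n‖ = (4 : ℝ) ^ n := by
    rw [norm_pow]; norm_num
  rw [h4]
  rw [div_le_one (by positivity)]
  have : ‖(n.centralBinom : ℂ)‖ = (n.centralBinom : ℝ) := by
    rw [Complex.norm_natCast]
  rw [this]
  exact_mod_cast centralBinom_le_four_pow n

lemma cb_succ (n : ℕ) : (2 * (n : ℂ) + 2) * cb (n + 1) = (2 * n + 1) * cb n := by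
  have h := Nat.succ_mul_centralBinom_succ n
  have hc : ((n + 1) * (n + 1).centralBinom : ℂ) = (2 * (2 * n + 1) * n.centralBinom : ℂ) := by
    exact_mod_cast congrArg (fun k : ℕ => (k : ℂ)) h
  push_cast at hc
  rw [cb, cb, pow_succ]
  field_simp
  linear_combination 2 * hc

lemma summable_cb {w : ℂ} (hw : ‖w‖ < 1) : Summable (fun n => cb n * w ^ n) := by
  apply Summable.of_norm
  refine Summable.of_nonneg_of_le (fun n => norm_nonneg _) (fun n => ?_)
    (summable_geometric_of_lt_one (norm_nonneg w) hw)
  rw [norm_mul, norm_pow]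
  exact mul_le_of_le_one_left (by positivity) (norm_cb_le_one n)

lemma summable_cbd {w : ℂ} (hw : ‖w‖ < 1/2) :
    Summable (fun n : ℕ => cb n * ((n : ℂ) * w ^ (n - 1))) := by
  apply Summable.of_norm
  have hs : Summable (fun n : ℕ => 2 * ((n : ℝ) ^ 1 * (1/2) ^ n)) :=
    (summable_pow_mul_geometric_of_norm_lt_one (R := ℝ) 1 (by rw [Real.norm_eq_abs]; rw [abs_of_pos] <;> norm_num)).mul_left 2
  refine Summable.of_nonneg_of_le (fun n => norm_nonneg _) (fun n => ?_) hs
  rcases Nat.eq_zero_or_pos n with h | h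
  · subst h; simp
  · rw [norm_mul, norm_mul, norm_pow, Complex.norm_natCast]
    have h1 : ‖w‖ ^ (n - 1) ≤ (1/2 : ℝ) ^ (n - 1) :=
      pow_le_pow_left₀ (norm_nonneg w) (le_of_lt hw) _
    have h2 : ((1:ℝ)/2) ^ (n - 1) = 2 * (1/2) ^ n := by
      rcases Nat.exists_eq_add_of_le h with ⟨m, rfl⟩
      simp [pow_succ]; ring
    calc ‖cb n‖ * ((n : ℝ) * ‖w‖ ^ (n-1)) ≤ 1 * ((n:ℝ) * ((1/2:ℝ)) ^ (n-1)) := by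
          apply mul_le_mul (norm_cb_le_one n) ?_ (by positivity) zero_le_one
          exact mul_le_mul_of_nonneg_left h1 (Nat.cast_nonneg n)
      _ = 2 * ((n:ℝ) ^ 1 * (1/2) ^ n) := by rw [one_mul, h2]; ring

noncomputable def gb : ℂ → ℂ := fun w => ∑' n, cb n * w ^ n

lemma hasDerivAt_gb {w : ℂ} (hw : w ∈ Metric.ball (0:ℂ) (1/2)) :
    HasDerivAt gb (∑' n : ℕ, cb n * ((n:ℂ) * w ^ (n - 1))) w := by
  refine hasDerivAt_tsum_of_isPreconnected
    (u := fun n : ℕ => 2 * ((n : ℝ) ^ 1 * (1/2) ^ n))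
    ((summable_pow_mul_geometric_of_norm_lt_one (R := ℝ) 1 (by rw [Real.norm_eq_abs]; rw [abs_of_pos] <;> norm_num)).mul_left 2)
    Metric.isOpen_ball ((convex_ball (0:ℂ) (1/2)).isPreconnected)
    (g := fun n y => cb n * y ^ n) (g' := fun n y => cb n * ((n:ℂ) * y ^ (n - 1)))
    (fun n y _ => (hasDerivAt_pow n y).const_mul (cb n)) (fun n y hy => ?_)
    (Metric.mem_ball_self (by norm_num)) ?_ hw
  · rw [Metric.mem_ball, dist_zero_right] at hy
    rcases Nat.eq_zero_or_pos n with h | h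
    · subst h; simp
    · rw [norm_mul, norm_mul, norm_pow, Complex.norm_natCast]
      have h1 : ‖y‖ ^ (n - 1) ≤ (1/2 : ℝ) ^ (n - 1) :=
        pow_le_pow_left₀ (norm_nonneg y) (le_of_lt hy) _
      have h2 : ((1:ℝ)/2) ^ (n - 1) = 2 * (1/2) ^ n := by
        rcases Nat.exists_eq_add_of_le h with ⟨m, rfl⟩
        simp [pow_succ]; ring
      calc ‖cb n‖ * ((n : ℝ) * ‖y‖ ^ (n-1)) ≤ 1 * ((n:ℝ) * ((1/2:ℝ)) ^ (n-1)) := by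
            apply mul_le_mul (norm_cb_le_one n) ?_ (by positivity) zero_le_one
            exact mul_le_mul_of_nonneg_left h1 (Nat.cast_nonneg n)
        _ = 2 * ((n:ℝ) ^ 1 * (1/2) ^ n) := by rw [one_mul, h2]; ring
  · exact summable_cb (by simp)


lemma gb_deriv_rel {w : ℂ} (hw : ‖w‖ < 1/2) :
    (1/2 : ℂ) * gb w = (∑' n : ℕ, cb n * ((n:ℂ) * w ^ (n - 1))) -
      w * (∑' n : ℕ, cb n * ((n:ℂ) * w ^ (n - 1))) := by
  set D := ∑' n : ℕ, cb n * ((n:ℂ) * w ^ (n - 1)) with hD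
  have hw1 : ‖w‖ < 1 := lt_trans hw (by norm_num)
  have hsD : Summable (fun n : ℕ => cb n * ((n:ℂ) * w ^ (n - 1))) := summable_cbd hw
  have h0 : HasSum (fun n : ℕ => cb n * ((n:ℂ) * w ^ (n - 1))) D := hsD.hasSum
  have h1 : HasSum (fun n : ℕ => cb (n+1) * (((n:ℂ)+1) * w ^ n)) D := by
    have := (hasSum_nat_add_iff' (f := fun n : ℕ => cb n * ((n:ℂ) * w ^ (n - 1))) 1).2 h0
    simpa using this
  have h2 : HasSum (fun n : ℕ => cb n * ((n:ℂ) * w ^ n)) (w * D) := by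
    refine (hasSum_nat_add_iff' (f := fun n : ℕ => cb n * ((n:ℂ) * w ^ n)) 1).1 ?_
    have hm := h1.mul_left w
    have heq : (fun n : ℕ => w * (cb (n+1) * (((n:ℂ)+1) * w ^ n)))
        = fun n : ℕ => cb (n+1) * ((((n:ℕ)+1 : ℕ):ℂ) * w ^ (n+1)) := by
      funext n; push_cast; ring
    rw [heq] at hm
    simpa using hm
  have h3 : HasSum (fun n : ℕ => cb n * w ^ n) (gb w) := (summable_cb hw1).hasSum
  have hsub := h1.sub h2
  have heq2 : (fun n : ℕ => cb (n+1) * (((n:ℂ)+1) * w ^ n) - cb n * ((n:ℂ) * w ^ n))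
      = fun n : ℕ => (1/2 : ℂ) * (cb n * w ^ n) := by
    funext n
    linear_combination (w ^ n / 2) * cb_succ n
  rw [heq2] at hsub
  exact (h3.mul_left (1/2)).unique hsub

lemma one_sub_slit {w : ℂ} (hw : ‖w‖ < 1/2) : (0:ℝ) < (1 - w).re := by
  have h := abs_le.1 (Complex.abs_re_le_norm w)
  simp only [Complex.sub_re, Complex.one_re]
  linarith [h.1, h.2]

lemma hasSum_cb_inv_sqrt {w : ℂ} (hw : ‖w‖ < 1/2) :
    HasSum (fun n : ℕ => cb n * w ^ n) ((1 - w) ^ (-(1/2) : ℂ)) := by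
  set s : Set ℂ := Metric.ball (0:ℂ) (1/2) with hs
  have hmem : ∀ z ∈ s, (1 - z) ∈ Complex.slitPlane := by
    intro z hz
    rw [hs, Metric.mem_ball, dist_zero_right] at hz
    exact Complex.mem_slitPlane_iff.2 (Or.inl (one_sub_slit hz))
  have hne : ∀ z ∈ s, (1 - z) ≠ 0 := fun z hz => Complex.slitPlane_ne_zero (hmem z hz)
  have hφ : ∀ z ∈ s, HasDerivAt (fun x => gb x * (1 - x) ^ ((1/2) : ℂ)) 0 z := by
    intro z hz
    have hzn : ‖z‖ < 1/2 := by rwa [hs, Metric.mem_ball, dist_zero_right] at hz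
    have hinner : HasDerivAt (fun x : ℂ => 1 - x) (-1) z := by
      simpa using ((hasDerivAt_id z).const_sub 1)
    have houter : HasDerivAt (fun x : ℂ => (1 - x) ^ ((1/2) : ℂ))
        (((1/2 : ℂ)) * (1 - z) ^ ((1/2 : ℂ) - 1) * (-1)) z :=
      HasDerivAt.cpow_const hinner (hmem z hz)
    have hg := hasDerivAt_gb hz
    have hmul := hg.mul houter
    refine hmul.congr_deriv ?_
    have hrel := gb_deriv_rel hzn
    set D := ∑' n : ℕ, cb n * ((n:ℂ) * z ^ (n - 1)) with hDdef
    have hexp : ((1/2 : ℂ) - 1) = -(1/2 : ℂ) := by norm_num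
    have hkey : (1 - z) * (1 - z) ^ (-(1/2) : ℂ) = (1 - z) ^ ((1/2) : ℂ) := by
      have h := Complex.cpow_add (x := 1 - z) (1 : ℂ) (-(1/2) : ℂ) (hne z hz)
      rw [Complex.cpow_one] at h
      norm_num at h
      rw [← h]
    rw [hexp]
    have hgb : gb z = 2 * ((1 - z) * D) := by linear_combination 2 * hrel
    rw [hgb]
    linear_combination (-D) * hkey
  have hconst : ∀ z ∈ s, gb z * (1 - z) ^ ((1/2):ℂ) = 1 := by
    intro z hz
    have h0s : (0:ℂ) ∈ s := Metric.mem_ball_self (by norm_num)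
    have hdiff : DifferentiableOn ℂ (fun x => gb x * (1 - x) ^ ((1/2):ℂ)) s :=
      fun x hx => ((hφ x hx).differentiableAt).differentiableWithinAt
    have hzero : ∀ x ∈ s, fderivWithin ℂ (fun x => gb x * (1 - x) ^ ((1/2):ℂ)) s x = 0 := by
      intro x hx
      rw [fderivWithin_of_isOpen Metric.isOpen_ball hx]
      have hd := (hφ x hx).deriv
      have : fderiv ℂ (fun x => gb x * (1 - x) ^ ((1/2):ℂ)) x
          = ContinuousLinearMap.smulRight (1 : ℂ →L[ℂ] ℂ) 0 := by
        rw [← hd]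
        exact ((hφ x hx).differentiableAt.hasDerivAt.hasFDerivAt).fderiv
      rw [this]
      ext y
      simp
    have hcz := (convex_ball (0:ℂ) (1/2)).is_const_of_fderivWithin_eq_zero (𝕜 := ℂ) hdiff hzero hz h0s
    rw [hcz]
    have hgb0 : gb 0 = 1 := by
      rw [gb]
      rw [tsum_eq_single 0 (fun b hb => by simp [zero_pow hb])]
      simp [cb, Nat.centralBinom]
    rw [hgb0]
    simp
  have hzmem : w ∈ s := by rw [hs, Metric.mem_ball, dist_zero_right]; exact hw
  have h1 := hconst w hzmem
  have hgbw : gb w = (1 - w) ^ (-(1/2):ℂ) := by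
    rw [Complex.cpow_neg]
    exact eq_inv_of_mul_eq_one_left h1
  have hfin := (summable_cb (lt_trans hw (by norm_num))).hasSum
  rw [show (∑' n : ℕ, cb n * w ^ n) = gb w from rfl, hgbw] at hfin
  exact hfin


lemma q_slit {ν : ℝ} (hν : ν ∈ Set.Icc (-1:ℝ) 1) {z : ℂ} (hz : ‖z‖ < 1) :
    (1 - 2 * (ν:ℂ) * z + z ^ 2) ∈ Complex.slitPlane := by
  rw [Complex.mem_slitPlane_iff]
  obtain ⟨hν1, hν2⟩ := hν
  have hab : z.re ^ 2 + z.im ^ 2 < 1 := by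
    have h1 : ‖z‖ < 1 := hz
    have h2 := Complex.sq_norm z
    rw [Complex.normSq_apply] at h2
    nlinarith [norm_nonneg z]
  set a := z.re with ha
  set b := z.im with hb
  have him : (1 - 2*(ν:ℂ)*z + z^2).im = 2*b*(a - ν) := by
    simp [Complex.add_im, Complex.sub_im, Complex.mul_im, Complex.mul_re, pow_two]
    ring
  have hre : (1 - 2*(ν:ℂ)*z + z^2).re = 1 - 2*ν*a + a^2 - b^2 := by
    simp [Complex.add_re, Complex.sub_re, Complex.mul_re, Complex.mul_im, pow_two]
    ring
  by_cases him0 : (1 - 2*(ν:ℂ)*z + z^2).im = 0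
  · left
    rw [hre]
    rw [him] at him0
    have hcase : b = 0 ∨ a - ν = 0 := by
      rcases mul_eq_zero.1 him0 with h | h
      · left; rcases mul_eq_zero.1 h with h' | h'
        · norm_num at h'
        · exact h'
      · right; exact h
    rcases hcase with hb0 | hav
    · have ha2 : a ^ 2 < 1 := by nlinarith [sq_nonneg b]
      have hva : ν * a < 1 := by nlinarith [sq_nonneg (ν - a), sq_nonneg (ν + a)]
      rw [hb0]
      nlinarith [mul_pos (sub_pos.2 hva) (sub_pos.2 hva),
        mul_nonneg (sq_nonneg a) (sub_nonneg.2 (show ν^2 ≤ 1 by nlinarith))]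
    · have : a = ν := by linarith
      subst this
      nlinarith
  · right; exact him0

lemma iteratedDeriv_polyeval (p : ℝ[X]) (n : ℕ) :
    iteratedDeriv n (fun y : ℝ => p.eval y) = fun y => (Polynomial.derivative^[n] p).eval y := by
  induction n generalizing p with
  | zero => simp
  | succ n ih =>
    rw [iteratedDeriv_succ']
    have : (deriv fun y : ℝ => p.eval y) = fun y => (Polynomial.derivative p).eval y := by
      funext y; exact Polynomial.deriv p
    rw [this, ih]
    rw [Function.iterate_succ_apply]

lemma legendreP_eq_sum (m : ℕ) (x : ℝ) :
    legendreP m x = (1 / (2 ^ m * m.factorial)) *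
      ∑ j ∈ range (m+1), ((-1:ℝ))^(m-j) * (m.choose j) * ((2*j).descFactorial m) * x^(2*j-m) := by
  rw [legendreP]
  congr 1
  have hfun : (fun y : ℝ => (y ^ 2 - 1) ^ m) = fun y => (((X^2 - 1 : ℝ[X]))^m).eval y := by
    funext y; simp
  rw [hfun, iteratedDeriv_polyeval]
  have hexp : ((X^2 - 1 : ℝ[X]))^m
      = ∑ j ∈ range (m+1), Polynomial.C (((-1:ℝ))^(m-j) * (m.choose j)) * X^(2*j) := by
    have := add_pow (X^2 : ℝ[X]) (-1) m
    rw [show (X^2 + (-1) : ℝ[X]) = X^2 - 1 by ring] at this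
    rw [this]
    refine Finset.sum_congr rfl fun j hj => ?_
    rw [← pow_mul]
    rw [map_mul, Polynomial.C_pow, Polynomial.C_neg, Polynomial.C_1, Polynomial.C_eq_natCast]
    ring
  rw [hexp, Polynomial.iterate_derivative_sum]
  simp only [Polynomial.eval_finset_sum]
  refine Finset.sum_congr rfl fun j hj => ?_
  rw [Polynomial.iterate_derivative_C_mul, Polynomial.iterate_derivative_X_pow_eq_natCast_mul]
  simp [Polynomial.eval_mul, Polynomial.eval_pow]
  ring


lemma choose_id {m j : ℕ} (h1 : j ≤ m) (h2 : m ≤ 2*j) :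
    (2*j).choose j * j.choose (m - j) = m.choose j * (2*j).choose m := by
  have e1 : ((2*j).choose j : ℚ) = (2*j).factorial / (j.factorial * j.factorial) := by
    rw [Nat.cast_choose ℚ (by omega), show 2*j - j = j by omega]
  have e2 : (j.choose (m-j) : ℚ) = j.factorial / ((m-j).factorial * (2*j-m).factorial) := by
    rw [Nat.cast_choose ℚ (by omega), show j - (m-j) = 2*j - m by omega]
  have e3 : (m.choose j : ℚ) = m.factorial / (j.factorial * (m-j).factorial) := by
    rw [Nat.cast_choose ℚ h1]
  have e4 : ((2*j).choose m : ℚ) = (2*j).factorial / (m.factorial * (2*j-m).factorial) := by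
    rw [Nat.cast_choose ℚ h2]
  have key : ((2*j).choose j * j.choose (m - j) : ℚ) = (m.choose j * (2*j).choose m : ℚ) := by
    push_cast
    rw [e1, e2, e3, e4]
    have f1 : (j.factorial : ℚ) ≠ 0 := by exact_mod_cast j.factorial_ne_zero
    have f2 : ((m-j).factorial : ℚ) ≠ 0 := by exact_mod_cast (m-j).factorial_ne_zero
    have f3 : ((2*j-m).factorial : ℚ) ≠ 0 := by exact_mod_cast (2*j-m).factorial_ne_zero
    have f4 : (m.factorial : ℚ) ≠ 0 := by exact_mod_cast m.factorial_ne_zero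
    field_simp
  exact_mod_cast key

lemma term_id {m j : ℕ} (h1 : j ≤ m) (h2 : m ≤ 2*j) (ν : ℝ) :
    ((-1:ℂ))^(m-j) * cb j * (2*(ν:ℂ))^(2*j-m) * ((j.choose (m-j)) : ℂ)
      = (1/(2^m * (m.factorial:ℂ))) * (((-1:ℂ))^(m-j) * (m.choose j : ℂ) *
        (((2*j).descFactorial m : ℕ) : ℂ) * (ν:ℂ)^(2*j-m)) := by
  rw [Nat.descFactorial_eq_factorial_mul_choose]
  rw [cb]
  have hcb : (Nat.centralBinom j : ℂ) = ((2*j).choose j : ℂ) := by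
    rw [Nat.centralBinom]
  rw [hcb, mul_pow]
  have h4 : ((4:ℂ))^j = 2^(2*j-m) * 2^m := by
    rw [← pow_add, show (4:ℂ) = 2^2 by norm_num, ← pow_mul]
    congr 1
    omega
  have hfac : ((m.factorial : ℂ)) ≠ 0 := by exact_mod_cast m.factorial_ne_zero
  have h2pow : ((2:ℂ))^m ≠ 0 := pow_ne_zero _ two_ne_zero
  have h2pow2 : ((2:ℂ))^(2*j-m) ≠ 0 := pow_ne_zero _ two_ne_zero
  have hch := choose_id h1 h2
  have hchC : ((2*j).choose j : ℂ) * (j.choose (m-j) : ℂ) = (m.choose j : ℂ) * ((2*j).choose m : ℂ) := by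
    exact_mod_cast congrArg (fun k : ℕ => (k:ℂ)) hch
  field_simp [h4]
  push_cast
  linear_combination (ν:ℂ)^(2*j-m) * 2^(2*j-m) * 2^m * (m.factorial : ℂ) * hchC - (ν:ℂ)^(2*j-m) * (m.factorial : ℂ) * (m.choose j : ℂ) * (((2*j).choose m : ℕ) : ℂ) * h4

lemma main_small (ν : ℝ) (hν : ν ∈ Set.Icc (-1:ℝ) 1) {t : ℂ} (ht : ‖t‖ < 1/5) :
    HasSum (fun m : ℕ => (legendreP m ν : ℂ) * t^m) ((1 - 2*(ν:ℂ)*t + t^2) ^ (-(1/2) : ℂ))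
    ∧ Summable (fun m : ℕ => |legendreP m ν| * ‖t‖^m) := by
  obtain ⟨hν1, hν2⟩ := hν
  have hνabs : |ν| ≤ 1 := abs_le.2 ⟨hν1, hν2⟩
  set w : ℂ := 2*(ν:ℂ)*t - t^2 with hwdef
  have hw2 : ‖w‖ < 1/2 := by
    have h1 : ‖w‖ ≤ ‖2*(ν:ℂ)*t‖ + ‖t^2‖ := norm_sub_le _ _
    have h2 : ‖2*(ν:ℂ)*t‖ = 2 * |ν| * ‖t‖ := by
      rw [show (2*(ν:ℂ)*t) = ((2*ν:ℝ):ℂ) * t by push_cast; ring, norm_mul,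
        Complex.norm_real, Real.norm_eq_abs, abs_mul, _root_.abs_two]
    have h3 : ‖t^2‖ = ‖t‖^2 := norm_pow t 2
    have ht0 : (0:ℝ) ≤ ‖t‖ := norm_nonneg t
    nlinarith
  have hqw : 1 - 2*(ν:ℂ)*t + t^2 = 1 - w := by rw [hwdef]; ring
  set G : ℕ × ℕ → ℂ := fun p =>
    if p.2 ≤ p.1 then cb p.1 * ((-(t^2))^(p.2) * (2*(ν:ℂ)*t)^(p.1-p.2) * ((p.1.choose p.2 : ℕ) : ℂ))
    else 0 with hGdef
  have hGzero : ∀ n k : ℕ, ¬ k ≤ n → G (n,k) = 0 := by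
    intro n k h; simp only [hGdef]; rw [if_neg h]
  have hfiber : ∀ n : ℕ, HasSum (fun k => G (n,k)) (cb n * w^n) := by
    intro n
    have hpow : w ^ n = ∑ k ∈ range (n+1), (-(t^2))^k * (2*(ν:ℂ)*t)^(n-k) * ((n.choose k : ℕ) : ℂ) := by
      rw [show w = -(t^2) + 2*(ν:ℂ)*t by rw [hwdef]; ring]
      exact add_pow _ _ n
    have h := hasSum_sum_of_ne_finset_zero (L := SummationFilter.unconditional ℕ) (s := range (n+1)) (f := fun k => G (n,k))
      (fun k hk => hGzero n k (by simp at hk; omega))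
    have heq : ∑ k ∈ range (n+1), G (n,k) = cb n * w ^ n := by
      rw [hpow, Finset.mul_sum]
      refine Finset.sum_congr rfl fun k hk => ?_
      simp only [Finset.mem_range, Nat.lt_succ_iff] at hk
      simp only [hGdef]
      rw [if_pos hk]
    rwa [heq] at h
  set r : ℝ := 2*‖t‖ + ‖t‖^2 with hrdef
  have hr1 : r < 1/2 := by
    have ht0 : (0:ℝ) ≤ ‖t‖ := norm_nonneg t
    nlinarith
  have hr0 : 0 ≤ r := by positivity
  have hfibernorm : ∀ n : ℕ, ∑ k ∈ range (n+1), ‖G (n,k)‖ ≤ r ^ n := by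
    intro n
    have hterm : ∀ k ∈ range (n+1), ‖G (n,k)‖ ≤
        (‖t‖^2)^k * (2*‖t‖)^(n-k) * ((n.choose k : ℕ) : ℝ) := by
      intro k hk
      simp only [Finset.mem_range, Nat.lt_succ_iff] at hk
      simp only [hGdef]
      rw [if_pos hk]
      rw [norm_mul, norm_mul, norm_mul, norm_pow, norm_pow, norm_neg, norm_pow]
      have e1 : ‖(2*(ν:ℂ)*t)‖ = 2 * |ν| * ‖t‖ := by
        rw [show (2*(ν:ℂ)*t) = ((2*ν:ℝ):ℂ) * t by push_cast; ring, norm_mul,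
          Complex.norm_real, Real.norm_eq_abs, abs_mul, _root_.abs_two]
      rw [e1, Complex.norm_natCast]
      have b1 : ‖cb n‖ ≤ 1 := norm_cb_le_one n
      have b2 : (2 * |ν| * ‖t‖)^(n-k) ≤ (2*‖t‖)^(n-k) := by
        apply pow_le_pow_left₀ (by positivity)
        nlinarith [norm_nonneg t, abs_nonneg ν]
      calc ‖cb n‖ * ((‖t‖^2)^k * (2 * |ν| * ‖t‖)^(n-k) * ((n.choose k : ℕ) : ℝ))
          ≤ 1 * ((‖t‖^2)^k * (2*‖t‖)^(n-k) * ((n.choose k : ℕ) : ℝ)) := by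
            apply mul_le_mul b1 ?_ (by positivity) zero_le_one
            apply mul_le_mul_of_nonneg_right ?_ (by positivity)
            exact mul_le_mul_of_nonneg_left b2 (by positivity)
        _ = (‖t‖^2)^k * (2*‖t‖)^(n-k) * ((n.choose k : ℕ) : ℝ) := one_mul _
    calc ∑ k ∈ range (n+1), ‖G (n,k)‖
        ≤ ∑ k ∈ range (n+1), (‖t‖^2)^k * (2*‖t‖)^(n-k) * ((n.choose k : ℕ) : ℝ) :=
          Finset.sum_le_sum hterm
      _ = (‖t‖^2 + 2*‖t‖)^n := (add_pow (‖t‖^2) (2*‖t‖) n).symm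
      _ = r ^ n := by rw [hrdef]; ring_nf
  have hGnorm : Summable (fun p : ℕ × ℕ => ‖G p‖) := by
    rw [summable_prod_of_nonneg (fun p => norm_nonneg _)]
    constructor
    · intro n
      exact summable_of_ne_finset_zero (s := range (n+1))
        (fun k hk => by rw [hGzero n k (by simp at hk; omega)]; exact norm_zero)
    · apply Summable.of_nonneg_of_le (fun n => tsum_nonneg (fun k => norm_nonneg _))
        (fun n => ?_) (summable_geometric_of_lt_one hr0 (by linarith))
      rw [tsum_eq_sum (s := range (n+1))
        (fun k hk => by rw [hGzero n k (by simp at hk; omega)]; exact norm_zero)]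
      exact hfibernorm n
  have hGsummable : Summable G := Summable.of_norm hGnorm
  have hGS : HasSum G ((1 - w) ^ (-(1/2) : ℂ)) := by
    have h := hGsummable.hasSum
    have h2 : HasSum (fun n => cb n * w^n) (∑' p, G p) := h.prod_fiberwise hfiber
    rw [(hasSum_cb_inv_sqrt hw2).unique h2]; exact h
  set i : ℕ × ℕ → ℕ × ℕ := fun p => (p.1 + p.2, p.2) with hidef
  have hi : Function.Injective i := by
    intro p q h
    simp only [hidef, Prod.mk.injEq] at h
    obtain ⟨h1, h2⟩ := h
    exact Prod.ext (by omega) h2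
  set G' : ℕ × ℕ → ℂ := fun q => if q.2 ≤ q.1 then G (q.1 - q.2, q.2) else 0 with hG'def
  have hG'zero : ∀ n k : ℕ, ¬ k ≤ n → G' (n,k) = 0 := by
    intro n k h; simp only [hG'def]; rw [if_neg h]
  have hcomp : G' ∘ i = G := by
    funext p
    simp only [Function.comp_apply, hidef, hG'def]
    rw [if_pos (by omega : p.2 ≤ p.1 + p.2)]
    congr 1
    exact Prod.ext (by simp) rfl
  have hvanish : ∀ q ∉ Set.range i, G' q = 0 := by
    intro q hq
    by_cases h : q.2 ≤ q.1
    · exact absurd ⟨(q.1 - q.2, q.2), Prod.ext (by show q.1 - q.2 + q.2 = q.1; omega) rfl⟩ hq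
    · exact hG'zero q.1 q.2 h
  have hG'S : HasSum G' ((1 - w) ^ (-(1/2) : ℂ)) := by
    refine (Function.Injective.hasSum_iff hi hvanish).1 ?_
    rwa [hcomp]
  have hG'norm : Summable (fun q : ℕ × ℕ => ‖G' q‖) := by
    refine (Function.Injective.summable_iff hi (fun q hq => by rw [hvanish q hq, norm_zero])).1 ?_
    have heqc : (fun q => ‖G' q‖) ∘ i = fun p => ‖G p‖ := by
      funext p
      simp only [Function.comp_apply]
      rw [show G' (i p) = (G' ∘ i) p from rfl, hcomp]
    rwa [heqc]
  have hEQ : ∀ m : ℕ, ∑ k ∈ range (m+1), G' (m,k) = (legendreP m ν : ℂ) * t^m := by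
    intro m
    have hstep : ∀ k ∈ range (m+1), G' (m,k) =
        (if k ≤ m - k then ((-1:ℂ))^k * cb (m-k) * (2*(ν:ℂ))^(m-2*k) * (((m-k).choose k : ℕ) : ℂ) else 0) * t^m := by
      intro k hk
      simp only [Finset.mem_range, Nat.lt_succ_iff] at hk
      simp only [hG'def, hGdef]
      rw [if_pos hk]
      by_cases hcond : k ≤ m - k
      · rw [if_pos hcond, if_pos hcond]
        have e1 : (-(t^2))^k = (-1:ℂ)^k * t^(2*k) := by
          rw [neg_pow, ← pow_mul]
        have e2 : (2*(ν:ℂ)*t)^(m-k-k) = (2*(ν:ℂ))^(m-2*k) * t^(m-2*k) := by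
          rw [mul_pow, show m - k - k = m - 2*k by omega]
        rw [e1, e2]
        have e3 : t^(2*k) * t^(m-2*k) = t^m := by
          rw [← pow_add]
          congr 1
          omega
        calc cb (m-k) * ((-1:ℂ)^k * t^(2*k) * ((2*(ν:ℂ))^(m-2*k) * t^(m-2*k)) * (((m-k).choose k : ℕ) : ℂ))
            = ((-1:ℂ))^k * cb (m-k) * (2*(ν:ℂ))^(m-2*k) * (((m-k).choose k : ℕ) : ℂ) * (t^(2*k) * t^(m-2*k)) := by ring
          _ = ((-1:ℂ))^k * cb (m-k) * (2*(ν:ℂ))^(m-2*k) * (((m-k).choose k : ℕ) : ℂ) * t^m := by rw [e3]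
      · rw [if_neg hcond, if_neg hcond, zero_mul]
    rw [Finset.sum_congr rfl hstep, ← Finset.sum_mul]
    congr 1
    rw [← Finset.sum_range_reflect]
    have hcast : (legendreP m ν : ℂ) = (1/(2^m * (m.factorial:ℂ))) *
        ∑ j ∈ range (m+1), ((-1:ℂ))^(m-j) * (m.choose j : ℂ) * (((2*j).descFactorial m : ℕ) : ℂ) * (ν:ℂ)^(2*j-m) := by
      rw [legendreP_eq_sum]
      push_cast
      ring
    rw [hcast, Finset.mul_sum]
    refine Finset.sum_congr rfl fun j hj => ?_
    simp only [Finset.mem_range, Nat.lt_succ_iff] at hj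
    simp only [Nat.add_sub_cancel]
    by_cases hcond : m ≤ 2*j
    · rw [if_pos (by omega : m - j ≤ m - (m - j))]
      rw [show m - (m - j) = j by omega, show m - 2*(m-j) = 2*j - m by omega]
      exact term_id hj hcond ν
    · rw [if_neg (by omega : ¬ (m - j ≤ m - (m - j)))]
      rw [Nat.descFactorial_eq_zero_iff_lt.2 (by omega : 2*j < m)]
      simp
  have hfib2 : ∀ m : ℕ, HasSum (fun k => G' (m,k)) ((legendreP m ν : ℂ) * t^m) := by
    intro m
    have h := hasSum_sum_of_ne_finset_zero (L := SummationFilter.unconditional ℕ) (s := range (m+1)) (f := fun k => G' (m,k))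
      (fun k hk => hG'zero m k (by simp at hk; omega))
    rwa [hEQ m] at h
  have hfinal : HasSum (fun m => (legendreP m ν : ℂ) * t^m) ((1 - w) ^ (-(1/2) : ℂ)) :=
    hG'S.prod_fiberwise hfib2
  constructor
  · rwa [hqw]
  · obtain ⟨hfibsum, htot⟩ := (summable_prod_of_nonneg (fun q => norm_nonneg _)).1 hG'norm
    refine Summable.of_nonneg_of_le (fun m => by positivity) (fun m => ?_) htot
    have h1 : |legendreP m ν| * ‖t‖^m = ‖(legendreP m ν : ℂ) * t^m‖ := by
      rw [norm_mul, norm_pow, Complex.norm_real, Real.norm_eq_abs]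
    rw [h1, ← (hfib2 m).tsum_eq]
    exact norm_tsum_le_tsum_norm (hfibsum m)

end Stmt10Aux

/-- Generating function of the Legendre polynomials: for `ν ∈ [−1,1]` and `|t| < 1`,
`1 − 2νt + t²` is not a nonpositive real and `1/√(1 − 2νt + t²) = Σ 𝒫ₙ(ν) tⁿ`. -/
theorem stmt_10 (ν : ℝ) (hν : ν ∈ Set.Icc (-1 : ℝ) 1) (t : ℂ) (ht : ‖t‖ < 1) :
    (¬ ∃ x : ℝ, x ≤ 0 ∧ (x : ℂ) = 1 - 2 * (ν : ℂ) * t + t ^ 2) ∧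
    HasSum (fun n : ℕ => (legendreP n ν : ℂ) * t ^ n)
      (1 / (1 - 2 * (ν : ℂ) * t + t ^ 2) ^ (1 / 2 : ℂ)) := by
  have htn : ‖t‖ < 1 := ht
  constructor
  · rintro ⟨x, hx0, hxe⟩
    have hslit := Stmt10Aux.q_slit hν htn
    rw [Complex.mem_slitPlane_iff, ← hxe] at hslit
    simp only [Complex.ofReal_re, Complex.ofReal_im] at hslit
    rcases hslit with h | h
    · linarith
    · exact h rfl
  · set f : ℂ → ℂ := fun z => (1 - 2*(ν:ℂ)*z + z^2) ^ (-(1/2) : ℂ) with hfdef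
    set q : FormalMultilinearSeries ℂ ℂ ℂ :=
      FormalMultilinearSeries.ofScalars ℂ (fun n => (legendreP n ν : ℂ)) with hqdef
    have hqnorm : ∀ n, ‖q n‖ = |legendreP n ν| := by
      intro n
      rw [hqdef, FormalMultilinearSeries.ofScalars_norm, Complex.norm_real, Real.norm_eq_abs]
    have hterm : ∀ y : ℂ, (fun n => q n fun _ => y) = fun n => (legendreP n ν : ℂ) * y^n := by
      intro y
      funext n
      rw [hqdef, FormalMultilinearSeries.ofScalars_apply_eq, smul_eq_mul]
    have hq : HasFPowerSeriesOnBall f q 0 ((1/6 : ℝ≥0) : ℝ≥0∞) := by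
      have h16 : ‖((1/6 : ℝ) : ℂ)‖ < 1/5 := by
        rw [Complex.norm_real, Real.norm_eq_abs,
          abs_of_nonneg (by norm_num : (0:ℝ) ≤ 1/6)]
        norm_num
      have hsum16 := (Stmt10Aux.main_small ν hν h16).2
      refine ⟨?_, by norm_num, ?_⟩
      · apply FormalMultilinearSeries.le_radius_of_summable
        refine hsum16.congr fun n => ?_
        rw [hqnorm n, Complex.norm_real, Real.norm_eq_abs,
          abs_of_nonneg (by norm_num : (0:ℝ) ≤ 1/6)]
        norm_num
      · intro y hy
        rw [EMetric.mem_ball, edist_zero_right] at hy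
        have hyn : ‖y‖ < 1/5 := by
          have h1 : (‖y‖₊ : ℝ≥0∞) < ((1/6 : ℝ≥0) : ℝ≥0∞) := hy
          rw [ENNReal.coe_lt_coe] at h1
          have h2 : ‖y‖ < ((1/6 : ℝ≥0) : ℝ) := by exact_mod_cast h1
          have : ((1/6 : ℝ≥0) : ℝ) = 1/6 := by norm_num
          rw [this] at h2
          linarith
        rw [zero_add, hterm y]
        exact (Stmt10Aux.main_small ν hν hyn).1
    obtain ⟨R, hR1, hR2⟩ : ∃ R : ℝ≥0, ‖t‖ < (R:ℝ) ∧ (R:ℝ) < 1 := by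
      refine ⟨⟨(‖t‖+1)/2, by positivity⟩, ?_, ?_⟩
      · show ‖t‖ < (‖t‖+1)/2; linarith [norm_nonneg t]
      · show (‖t‖+1)/2 < 1; linarith [norm_nonneg t]
    have hRpos : 0 < R := by
      have : (0:ℝ) < (R:ℝ) := lt_of_le_of_lt (norm_nonneg t) hR1
      exact_mod_cast this
    have hdiff : DifferentiableOn ℂ f (Metric.closedBall 0 (R:ℝ)) := by
      intro z hz
      have hzn : ‖z‖ < 1 := by
        rw [Metric.mem_closedBall, dist_zero_right] at hz
        linarith
      apply DifferentiableAt.differentiableWithinAt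
      have hbase : DifferentiableAt ℂ (fun z : ℂ => 1 - 2*(ν:ℂ)*z + z^2) z := by
        fun_prop
      exact hbase.cpow (differentiableAt_const _) (Stmt10Aux.q_slit hν hzn)
    have hp := hdiff.hasFPowerSeriesOnBall hRpos
    have hpq : cauchyPowerSeries f 0 R = q :=
      hp.hasFPowerSeriesAt.eq_formalMultilinearSeries hq.hasFPowerSeriesAt
    have htmem : t ∈ Metric.eball (0:ℂ) R := by
      rw [EMetric.mem_ball, edist_zero_right]
      have : ‖t‖₊ < R := by
        rw [← NNReal.coe_lt_coe]
        simpa using hR1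
      exact_mod_cast this
    have hsum := hp.hasSum htmem
    rw [hpq, zero_add, hterm t] at hsum
    have hval : f t = 1 / (1 - 2*(ν:ℂ)*t + t^2) ^ (1/2 : ℂ) := by
      show (1 - 2*(ν:ℂ)*t + t^2) ^ (-(1/2) : ℂ) = _
      rw [Complex.cpow_neg]
      exact (one_div _).symm
    rwa [hval] at hsum
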